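/- Let A = (α,β/K) be a quaternion algebra over a field K. Let p, q ∈ K[X] be nonzero, 𝔭 ∈ A[X] nonzero with p·q = 𝔭·𝔭̄, and let 𝔯 ∈ A[X] be the remainder of 𝔭 modulo q, so that 𝔭 = 𝔰·q + 𝔯 with deg 𝔯 < deg q. Let 𝔮 ∈ A[X] satisfy 𝔮·q = 𝔭·𝔯̄ and let r ∈ K[X] satisfy r·p = 𝔮·𝔮̄. If 𝔯 ≠ 0 and 𝔮 ≠ 0, then deg r < deg q. -/

import Mathlib

open Polynomial Quaternion

/-- Coefficientwise conjugation of a quaternionic polynomial: if `𝔭 = Σ aᵢ Xⁱ`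
then `conjPoly 𝔭 = Σ āᵢ Xⁱ`. -/
noncomputable def conjPoly {K : Type*} [Field K] {α β : K}
    (p : Polynomial ℍ[K,α,β]) : Polynomial ℍ[K,α,β] :=
  p.sum fun n a => Polynomial.C (star a) * Polynomial.X ^ n

section Aux

variable {K : Type*} [Field K] {α β : K}

lemma conjPoly_coeff (p : Polynomial ℍ[K,α,β]) (n : ℕ) :
    (conjPoly p).coeff n = star (p.coeff n) := by
  unfold conjPoly
  rw [Polynomial.coeff_sum]
  rw [Polynomial.sum, Finset.sum_eq_single n]
  · simp
  · intro b _ hb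
    simp only [Polynomial.coeff_C_mul, Polynomial.coeff_X_pow]
    simp [Ne.symm hb]
  · intro h; simp [Polynomial.notMem_support_iff.mp h]

lemma conjPoly_mul (f g : Polynomial ℍ[K,α,β]) :
    conjPoly (f * g) = conjPoly g * conjPoly f := by
  apply Polynomial.ext; intro n
  simp only [conjPoly_coeff, Polynomial.coeff_mul, star_sum, star_mul]
  rw [← Finset.Nat.sum_antidiagonal_swap]
  refine Finset.sum_congr rfl fun x hx => ?_
  simp [conjPoly_coeff]

lemma conjPoly_conjPoly (f : Polynomial ℍ[K,α,β]) : conjPoly (conjPoly f) = f := by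
  apply Polynomial.ext; intro n; simp [conjPoly_coeff]

lemma conjPoly_map (s : K[X]) :
    conjPoly (s.map (algebraMap K ℍ[K,α,β])) = s.map (algebraMap K ℍ[K,α,β]) := by
  apply Polynomial.ext; intro n
  simp [conjPoly_coeff, Polynomial.coeff_map, QuaternionAlgebra.star_coe]

lemma degree_conjPoly (f : Polynomial ℍ[K,α,β]) : (conjPoly f).degree = f.degree := by
  have h : (conjPoly f).support = f.support := by
    ext n; simp [Polynomial.mem_support_iff, conjPoly_coeff, star_eq_zero]
  unfold Polynomial.degree
  rw [h]

lemma star_fixed_comm {x : ℍ[K,α,β]} (hx : star x = x) (y : ℍ[K,α,β]) : x * y = y * x := by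
  have hb : x.imI + x.imI = 0 := by
    have := congrArg QuaternionAlgebra.imI hx; simp at this; linear_combination -this
  have hc : x.imJ + x.imJ = 0 := by
    have := congrArg QuaternionAlgebra.imJ hx; simp at this; linear_combination -this
  have hd : x.imK + x.imK = 0 := by
    have := congrArg QuaternionAlgebra.imK hx; simp at this; linear_combination -this
  ext <;> simp only [QuaternionAlgebra.re_mul, QuaternionAlgebra.imI_mul,
    QuaternionAlgebra.imJ_mul, QuaternionAlgebra.imK_mul]
  · ring
  · linear_combination (-β*y.imK)*hc + (β*y.imJ)*hd
  · linear_combination (α*y.imK)*hb + (-α*y.imI)*hd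
  · linear_combination (y.imJ)*hb + (-y.imI)*hc

lemma conjPoly_fixed_comm {f : Polynomial ℍ[K,α,β]} (hf : conjPoly f = f)
    (g : Polynomial ℍ[K,α,β]) : f * g = g * f := by
  apply Polynomial.ext; intro n
  rw [Polynomial.coeff_mul, Polynomial.coeff_mul, ← Finset.Nat.sum_antidiagonal_swap]
  refine Finset.sum_congr rfl fun x hx => ?_
  simp only [Prod.fst_swap, Prod.snd_swap]
  have hfix : star (f.coeff x.2) = f.coeff x.2 := by
    rw [← conjPoly_coeff, hf]
  exact (star_fixed_comm hfix (g.coeff x.1))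

end Aux

/-- Let `A = (α,β/K)` be a quaternion algebra over a field `K`.  Let
`p, q ∈ K[X]` be nonzero, `𝔭 ∈ A[X]` nonzero with `p·q = 𝔭·𝔭̄`, and let `𝔯` be the remainder
of `𝔭` modulo `q`, so `𝔭 = 𝔰·q + 𝔯` with `deg 𝔯 < deg q`.  Let `𝔮 ∈ A[X]` satisfy
`𝔮·q = 𝔭·𝔯̄` and `r ∈ K[X]` satisfy `r·p = 𝔮·𝔮̄`.  If `𝔯 ≠ 0` and `𝔮 ≠ 0`,
then `deg r < deg q`. -/
theorem degree_reduction {K : Type*} [Field K] (α β : K)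
    (p q : K[X]) (hp : p ≠ 0) (hq : q ≠ 0)
    (𝔭 𝔰 𝔯 𝔮 : Polynomial ℍ[K,α,β]) (h𝔭 : 𝔭 ≠ 0)
    (hnorm : (p * q).map (algebraMap K ℍ[K,α,β]) = 𝔭 * conjPoly 𝔭)
    (hrem : 𝔭 = 𝔰 * q.map (algebraMap K ℍ[K,α,β]) + 𝔯)
    (hdeg𝔯 : 𝔯.degree < q.degree)
    (h𝔮 : 𝔮 * q.map (algebraMap K ℍ[K,α,β]) = 𝔭 * conjPoly 𝔯)
    (r : K[X]) (hr : (r * p).map (algebraMap K ℍ[K,α,β]) = 𝔮 * conjPoly 𝔮)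
    (h𝔯0 : 𝔯 ≠ 0) (h𝔮0 : 𝔮 ≠ 0) :
    r.degree < q.degree := by
  by_cases hr0 : r = 0
  · subst hr0
    rw [Polynomial.degree_zero]
    exact Ne.bot_lt (fun h => hq (Polynomial.degree_eq_bot.mp h))
  set A := ℍ[K,α,β]
  set φ : K →+* A := algebraMap K A with hφ
  have hφinj : Function.Injective φ := RingHom.injective φ
  set mq : Polynomial A := q.map φ with hmq
  -- q.map is conj-fixed hence central
  have hmqfix : conjPoly mq = mq := conjPoly_map q
  -- the norm 𝔯̄ * 𝔯 is conj-fixed hence central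
  have hNfix : conjPoly (conjPoly 𝔯 * 𝔯) = conjPoly 𝔯 * 𝔯 := by
    rw [conjPoly_mul, conjPoly_conjPoly]
  -- key identity : (r*p*q*q).map φ = (p*q).map φ * (𝔯̄ * 𝔯)
  have key : (r * p * q * q).map φ = (p * q).map φ * (conjPoly 𝔯 * 𝔯) := by
    have h1 : (𝔮 * mq) * conjPoly (𝔮 * mq) = (𝔭 * conjPoly 𝔯) * conjPoly (𝔭 * conjPoly 𝔯) := by
      rw [h𝔮]
    rw [conjPoly_mul, conjPoly_mul, hmqfix, conjPoly_conjPoly] at h1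
    -- h1 : 𝔮 * mq * (mq * conjPoly 𝔮) = 𝔭 * conjPoly 𝔯 * (𝔯 * conjPoly 𝔭)
    have cm : ∀ g : Polynomial A, mq * g = g * mq := conjPoly_fixed_comm hmqfix
    have cm2 : ∀ g : Polynomial A, (mq * mq) * g = g * (mq * mq) := by
      intro g
      rw [mul_assoc, cm g, ← mul_assoc, cm g, mul_assoc]
    calc (r * p * q * q).map φ
        = (r * p).map φ * (mq * mq) := by
          simp only [Polynomial.map_mul, hmq, mul_assoc]
      _ = 𝔮 * conjPoly 𝔮 * (mq * mq) := by rw [hr]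
      _ = 𝔮 * mq * (mq * conjPoly 𝔮) := by
          rw [mul_assoc, ← cm2 (conjPoly 𝔮), mul_assoc, ← mul_assoc]
      _ = 𝔭 * conjPoly 𝔯 * (𝔯 * conjPoly 𝔭) := h1
      _ = 𝔭 * ((conjPoly 𝔯 * 𝔯) * conjPoly 𝔭) := by
          rw [mul_assoc, ← mul_assoc (conjPoly 𝔯)]
      _ = 𝔭 * (conjPoly 𝔭 * (conjPoly 𝔯 * 𝔯)) := by
          rw [conjPoly_fixed_comm hNfix (conjPoly 𝔭)]
      _ = (𝔭 * conjPoly 𝔭) * (conjPoly 𝔯 * 𝔯) := by rw [mul_assoc]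
      _ = (p * q).map φ * (conjPoly 𝔯 * 𝔯) := by rw [hnorm]
  -- degrees
  have h𝔯deg : (conjPoly 𝔯 * 𝔯).degree ≤ 𝔯.degree + 𝔯.degree := by
    calc (conjPoly 𝔯 * 𝔯).degree ≤ (conjPoly 𝔯).degree + 𝔯.degree := Polynomial.degree_mul_le _ _
      _ = 𝔯.degree + 𝔯.degree := by rw [degree_conjPoly]
  have hL : ((r * p * q * q).map φ).degree
      = r.degree + p.degree + q.degree + q.degree := by
    rw [Polynomial.degree_map_eq_of_injective hφinj,
      Polynomial.degree_mul, Polynomial.degree_mul, Polynomial.degree_mul]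
  have hR : ((p * q).map φ * (conjPoly 𝔯 * 𝔯)).degree
      ≤ p.degree + q.degree + (𝔯.degree + 𝔯.degree) := by
    calc ((p * q).map φ * (conjPoly 𝔯 * 𝔯)).degree
        ≤ ((p * q).map φ).degree + (conjPoly 𝔯 * 𝔯).degree := Polynomial.degree_mul_le _ _
      _ ≤ p.degree + q.degree + (𝔯.degree + 𝔯.degree) := by
          rw [Polynomial.degree_map_eq_of_injective hφinj, Polynomial.degree_mul]
          exact add_le_add le_rfl h𝔯deg
  have hineq : r.degree + p.degree + q.degree + q.degree
      ≤ p.degree + q.degree + (𝔯.degree + 𝔯.degree) := by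
    rw [← hL, key]; exact hR
  -- convert to natural numbers
  rw [Polynomial.degree_eq_natDegree hr0, Polynomial.degree_eq_natDegree hp,
    Polynomial.degree_eq_natDegree hq, Polynomial.degree_eq_natDegree h𝔯0] at hineq
  rw [Polynomial.degree_eq_natDegree h𝔯0, Polynomial.degree_eq_natDegree hq] at hdeg𝔯
  rw [Polynomial.degree_eq_natDegree hr0, Polynomial.degree_eq_natDegree hq]
  have h1 : r.natDegree + p.natDegree + q.natDegree + q.natDegree
      ≤ p.natDegree + q.natDegree + (𝔯.natDegree + 𝔯.natDegree) := by
    exact_mod_cast hineq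
  have h2 : 𝔯.natDegree < q.natDegree := by exact_mod_cast hdeg𝔯
  exact_mod_cast Nat.lt_of_lt_of_le (by omega : r.natDegree < q.natDegree) le_rfl
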